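/- arXiv:2012.05794 — 2 statements merged into one kernel-verified Lean document; each statement's English description precedes it below -/
import Mathlib

section
/- Let initial data ρ_{o,j} ∈ L∞(ℝ; [0,1]) for j = 1,…,M, and assume the CFL condition λ·𝒱 ≤ 1/2. Then all values ρ^n_{j,k} (and the intermediate values ρ^{n+1/2}_{j,k}) produced by the Godunov scheme with operator splitting lie in the interval [0,1]; in particular, the set [0,1]^M is invariant for the scheme. -/
open scoped BigOperators ENNReal
open MeasureTheory

noncomputable def src (M : ℕ) (v : ℕ → ℝ → ℝ) (j : ℕ) (u w U W : ℝ) : ℝ :=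
  if 1 ≤ j ∧ j + 1 ≤ M then
    max (v (j + 1) W - v j U) 0 * u * (1 - w)
      - max (-(v (j + 1) W - v j U)) 0 * w * (1 - u)
  else 0

noncomputable def numFlux (v : ℕ → ℝ → ℝ) (θ : ℕ → ℝ) (j : ℕ) (u w : ℝ) : ℝ :=
  min (min u (θ j) * v j (min u (θ j))) (max w (θ j) * v j (max w (θ j)))

noncomputable def gam (dx : ℝ) (w : ℝ → ℝ) (h : ℤ) : ℝ :=
  ∫ y in ((h : ℝ) * dx)..(((h : ℝ) + 1) * dx), w y

noncomputable def Hset (dx : ℝ) (w : ℝ → ℝ) : Finset ℤ :=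
  Finset.Icc ⌊sInf (tsupport w) / dx⌋ (⌊sSup (tsupport w) / dx⌋ - 1)

noncomputable def dconv (dx : ℝ) (w : ℝ → ℝ) (r : ℤ → ℝ) (k : ℤ) : ℝ :=
  ∑ h ∈ Hset dx w, gam dx w h * r (k + h + 1)
/-! In each half step the increment of `ρ_{j,k}` is at least `-a ρ_{j,k}` and at most
`b (1 - ρ_{j,k})` with `a, b ≤ 1`, so `[0,1]` is preserved. For the Godunov step the flux leaving
a cell is at most `V_max ρ` (demand) and the flux entering it at most `V'_max (1 - ρ)` (supply:
`v(ρ) ≤ V'_max (1 - ρ)` because `v` is Lipschitz and vanishes at `1`), and the CFL condition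
gives `λ V_max, λ V'_max ≤ 1`. For the relaxation step the discrete convolution stays in `[0,1]`
since its weights are nonnegative with sum at most `∫ w = 1`; the inflow from a neighbouring
lane is then at most `V_max (1 - ρ)` and the outflow at most `V_max ρ`, and `2 Δt V_max ≤ 1`
follows from the CFL condition because `Δx < 1`. -/

open Set

theorem intervalIntegral_div_sub_mem_Icc {f : ℝ → ℝ} {a b : ℝ} (hab : a < b)
    (hf : ∀ x ∈ Icc a b, f x ∈ Icc (0 : ℝ) 1) :
    (∫ x in a..b, f x) / (b - a) ∈ Icc (0 : ℝ) 1 := by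
  have hba : 0 < b - a := sub_pos.2 hab
  have hle : (∫ x in a..b, f x) ≤ b - a := by
    have hnorm := intervalIntegral.norm_integral_le_of_norm_le_const (C := 1) (f := f)
      fun x hx => by
        rw [uIoc_of_le hab.le] at hx
        have hfx := hf x (Ioc_subset_Icc_self hx)
        rw [Real.norm_eq_abs, abs_of_nonneg hfx.1]
        exact hfx.2
    rw [one_mul, abs_of_pos hba] at hnorm
    exact (le_abs_self _).trans hnorm
  exact ⟨div_nonneg (intervalIntegral.integral_nonneg hab.le fun x hx => (hf x hx).1) hba.le,
    (div_le_one hba).2 hle⟩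

section Kernel

variable {dx : ℝ} {w : ℝ → ℝ}

theorem gam_nonneg (hdx : 0 ≤ dx) (hw : ∀ x, 0 ≤ w x) (h : ℤ) : 0 ≤ gam dx w h :=
  intervalIntegral.integral_nonneg (by nlinarith) fun x _ => hw x

theorem sum_gam_le_one (hdx : 0 ≤ dx) (hw : ∀ x, 0 ≤ w x) (hw_int : ∫ x, w x = 1)
    (s : Finset ℤ) : ∑ h ∈ s, gam dx w h ≤ 1 := by
  have hint : Integrable w := by
    by_contra h
    rw [integral_undef h] at hw_int
    exact zero_ne_one hw_int
  have hdisj : Pairwise (Function.onFun Disjoint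
      fun h : ℤ => Ioc ((h : ℝ) * dx) (((h : ℝ) + 1) * dx)) := by
    simpa [zsmul_eq_mul] using pairwise_disjoint_Ioc_add_zsmul (0 : ℝ) dx
  calc ∑ h ∈ s, gam dx w h
      = ∫ y in ⋃ h ∈ s, Ioc ((h : ℝ) * dx) (((h : ℝ) + 1) * dx), w y := by
        rw [integral_biUnion_finset s (fun _ _ => measurableSet_Ioc) (hdisj.set_pairwise _)
          fun _ _ => hint.integrableOn]
        refine Finset.sum_congr rfl fun h _ => ?_
        rw [gam, intervalIntegral.integral_of_le (by nlinarith)]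
    _ ≤ ∫ y, w y := setIntegral_le_integral hint (.of_forall hw)
    _ = 1 := hw_int

theorem dconv_mem_Icc (hdx : 0 ≤ dx) (hw : ∀ x, 0 ≤ w x) (hw_int : ∫ x, w x = 1)
    {r : ℤ → ℝ} (hr : ∀ k, r k ∈ Icc (0 : ℝ) 1) (k : ℤ) :
    dconv dx w r k ∈ Icc (0 : ℝ) 1 :=
  ⟨Finset.sum_nonneg fun h _ => mul_nonneg (gam_nonneg hdx hw h) (hr _).1,
    calc ∑ h ∈ Hset dx w, gam dx w h * r (k + h + 1)
        ≤ ∑ h ∈ Hset dx w, gam dx w h :=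
          Finset.sum_le_sum fun h _ => mul_le_of_le_one_right (gam_nonneg hdx hw h) (hr _).2
      _ ≤ 1 := sum_gam_le_one hdx hw hw_int _⟩

end Kernel

theorem le_mul_one_sub_of_lipschitzOnWith {f : ℝ → ℝ} {K : NNReal}
    (hf : LipschitzOnWith K f (Icc 0 1)) (h1 : f 1 = 0) {x : ℝ} (hx : x ∈ Icc (0 : ℝ) 1) :
    f x ≤ K * (1 - x) := by
  have hdist := hf.dist_le_mul x hx 1 (right_mem_Icc.2 zero_le_one)
  rw [Real.dist_eq, Real.dist_eq, h1, sub_zero, abs_sub_comm, abs_of_nonneg (sub_nonneg.2 hx.2)]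
    at hdist
  exact (le_abs_self _).trans hdist

section NumFlux

variable {v : ℕ → ℝ → ℝ} {θ : ℕ → ℝ} {j : ℕ} {u w : ℝ}

theorem numFlux_nonneg (hθ : θ j ∈ Icc (0 : ℝ) 1) (hv : ∀ x ∈ Icc (0 : ℝ) 1, 0 ≤ v j x)
    (hu : u ∈ Icc (0 : ℝ) 1) (hw : w ∈ Icc (0 : ℝ) 1) : 0 ≤ numFlux v θ j u w := by
  have hmin : min u (θ j) ∈ Icc (0 : ℝ) 1 := ⟨le_min hu.1 hθ.1, (min_le_left _ _).trans hu.2⟩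
  have hmax : max w (θ j) ∈ Icc (0 : ℝ) 1 := ⟨hw.1.trans (le_max_left _ _), max_le hw.2 hθ.2⟩
  exact le_min (mul_nonneg hmin.1 (hv _ hmin)) (mul_nonneg hmax.1 (hv _ hmax))

theorem numFlux_le_mul_left {K : ℝ} (hθ : θ j ∈ Icc (0 : ℝ) 1)
    (hv : ∀ x ∈ Icc (0 : ℝ) 1, 0 ≤ v j x) (hvK : ∀ x ∈ Icc (0 : ℝ) 1, v j x ≤ K)
    (hu : u ∈ Icc (0 : ℝ) 1) : numFlux v θ j u w ≤ K * u := by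
  set m := min u (θ j)
  have hm : m ∈ Icc (0 : ℝ) 1 := ⟨le_min hu.1 hθ.1, (min_le_left _ _).trans hu.2⟩
  calc numFlux v θ j u w ≤ m * v j m := min_le_left _ _
    _ ≤ u * v j m := mul_le_mul_of_nonneg_right (min_le_left _ _) (hv m hm)
    _ ≤ u * K := mul_le_mul_of_nonneg_left (hvK m hm) hu.1
    _ = K * u := mul_comm _ _

theorem numFlux_le_mul_one_sub {L : ℝ} (hL : 0 ≤ L) (hθ : θ j ∈ Icc (0 : ℝ) 1)
    (hv : ∀ x ∈ Icc (0 : ℝ) 1, 0 ≤ v j x) (hvL : ∀ x ∈ Icc (0 : ℝ) 1, v j x ≤ L * (1 - x))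
    (hw : w ∈ Icc (0 : ℝ) 1) : numFlux v θ j u w ≤ L * (1 - w) := by
  set m := max w (θ j)
  have hm : m ∈ Icc (0 : ℝ) 1 := ⟨hw.1.trans (le_max_left _ _), max_le hw.2 hθ.2⟩
  calc numFlux v θ j u w ≤ m * v j m := min_le_right _ _
    _ ≤ 1 * v j m := mul_le_mul_of_nonneg_right hm.2 (hv m hm)
    _ ≤ L * (1 - m) := (one_mul _).trans_le (hvL m hm)
    _ ≤ L * (1 - w) := mul_le_mul_of_nonneg_left (by linarith [le_max_left w (θ j)]) hL

end NumFlux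

theorem sub_mul_sub_mem_Icc {u c A B K L : ℝ} (hu : u ∈ Icc (0 : ℝ) 1) (hc : 0 ≤ c)
    (hA : A ∈ Icc 0 (K * u)) (hB : B ∈ Icc 0 (L * (1 - u))) (hcK : c * K ≤ 1)
    (hcL : c * L ≤ 1) : u - c * (A - B) ∈ Icc (0 : ℝ) 1 := by
  obtain ⟨hu0, hu1⟩ := hu
  constructor
  · nlinarith [mul_nonneg hc hB.1, mul_le_mul_of_nonneg_left hA.2 hc,
      mul_nonneg hu0 (sub_nonneg.2 hcK)]
  · nlinarith [mul_nonneg hc hA.1, mul_le_mul_of_nonneg_left hB.2 hc,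
      mul_nonneg (sub_nonneg.2 hu1) (sub_nonneg.2 hcL)]

theorem godunov_step_mem_Icc {v : ℕ → ℝ → ℝ} {θ : ℕ → ℝ} {j : ℕ} {c K L l u r : ℝ}
    (hc : 0 ≤ c) (hL : 0 ≤ L) (hcK : c * K ≤ 1) (hcL : c * L ≤ 1)
    (hθ : θ j ∈ Icc (0 : ℝ) 1) (hv : ∀ x ∈ Icc (0 : ℝ) 1, 0 ≤ v j x)
    (hvK : ∀ x ∈ Icc (0 : ℝ) 1, v j x ≤ K) (hvL : ∀ x ∈ Icc (0 : ℝ) 1, v j x ≤ L * (1 - x))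
    (hl : l ∈ Icc (0 : ℝ) 1) (hu : u ∈ Icc (0 : ℝ) 1) (hr : r ∈ Icc (0 : ℝ) 1) :
    u - c * (numFlux v θ j u r - numFlux v θ j l u) ∈ Icc (0 : ℝ) 1 :=
  sub_mul_sub_mem_Icc hu hc
    ⟨numFlux_nonneg hθ hv hu hr, numFlux_le_mul_left hθ hv hvK hu⟩
    ⟨numFlux_nonneg hθ hv hl hu, numFlux_le_mul_one_sub hL hθ hv hvL hu⟩ hcK hcL

def laneExchange (c u w : ℝ) : ℝ :=
  max c 0 * u * (1 - w) - max (-c) 0 * w * (1 - u)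

theorem src_eq_ite (M : ℕ) (v : ℕ → ℝ → ℝ) (i : ℕ) (u w U W : ℝ) :
    src M v i u w U W =
      if 1 ≤ i ∧ i + 1 ≤ M then laneExchange (v (i + 1) W - v i U) u w else 0 :=
  rfl

theorem laneExchange_neg_swap (c u w : ℝ) : laneExchange (-c) w u = -laneExchange c u w := by
  simp only [laneExchange, neg_neg]
  ring

section LaneExchange

variable {c u w K : ℝ}

theorem laneExchange_mem_Icc_inflow (hc : |c| ≤ K) (hu : u ∈ Icc (0 : ℝ) 1)
    (hw : w ∈ Icc (0 : ℝ) 1) : laneExchange c u w ∈ Icc (-(K * w)) (K * (1 - w)) := by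
  obtain ⟨hu0, hu1⟩ := hu
  obtain ⟨hw0, hw1⟩ := hw
  have hK : 0 ≤ K := (abs_nonneg c).trans hc
  have hpos : max c 0 ∈ Icc 0 K := ⟨le_max_right _ _, max_le ((le_abs_self c).trans hc) hK⟩
  have hneg : max (-c) 0 ∈ Icc 0 K := ⟨le_max_right _ _, max_le ((neg_le_abs c).trans hc) hK⟩
  have hin : max c 0 * u * (1 - w) ∈ Icc 0 (K * (1 - w)) :=
    ⟨by positivity, mul_le_mul_of_nonneg_right (by nlinarith [hpos.1, hpos.2]) (by linarith)⟩
  have hout : max (-c) 0 * w * (1 - u) ∈ Icc 0 (K * w) :=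
    ⟨mul_nonneg (mul_nonneg hneg.1 hw0) (sub_nonneg.2 hu1),
      by nlinarith [hneg.1, hneg.2, mul_nonneg hneg.1 hw0]⟩
  unfold laneExchange
  constructor <;> linarith [hin.1, hin.2, hout.1, hout.2]

theorem laneExchange_mem_Icc_outflow (hc : |c| ≤ K) (hu : u ∈ Icc (0 : ℝ) 1)
    (hw : w ∈ Icc (0 : ℝ) 1) : laneExchange c u w ∈ Icc (-(K * (1 - u))) (K * u) := by
  have h := laneExchange_mem_Icc_inflow (c := -c) ((abs_neg c).trans_le hc) hw hu
  rw [laneExchange_neg_swap] at h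
  constructor <;> linarith [h.1, h.2]

end LaneExchange

section Source

variable {M : ℕ} {v : ℕ → ℝ → ℝ} {K : ℝ} {r R : ℕ → ℝ}

theorem abs_velocity_sub_le {i : ℕ} {U W : ℝ}
    (hv : ∀ l ∈ Finset.Icc 1 M, ∀ x ∈ Icc (0 : ℝ) 1, v l x ∈ Icc 0 K)
    (hU : U ∈ Icc (0 : ℝ) 1) (hW : W ∈ Icc (0 : ℝ) 1) (hi : 1 ≤ i ∧ i + 1 ≤ M) :
    |v (i + 1) W - v i U| ≤ K := by
  have hi1 := hv (i + 1) (Finset.mem_Icc.2 ⟨by omega, hi.2⟩) W hW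
  have hi0 := hv i (Finset.mem_Icc.2 ⟨hi.1, by omega⟩) U hU
  exact abs_sub_le_of_nonneg_of_le hi1.1 hi1.2 hi0.1 hi0.2

theorem src_mem_Icc_inflow (hK : 0 ≤ K)
    (hv : ∀ l ∈ Finset.Icc 1 M, ∀ x ∈ Icc (0 : ℝ) 1, v l x ∈ Icc 0 K)
    (hr : ∀ l ∈ Finset.Icc 1 M, r l ∈ Icc (0 : ℝ) 1)
    (hR : ∀ l ∈ Finset.Icc 1 M, R l ∈ Icc (0 : ℝ) 1) {j : ℕ} (hj : j ∈ Finset.Icc 1 M) :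
    src M v (j - 1) (r (j - 1)) (r j) (R (j - 1)) (R j) ∈ Icc (-(K * r j)) (K * (1 - r j)) := by
  rw [src_eq_ite]
  split_ifs with hi
  · have hj' : j - 1 ∈ Finset.Icc 1 M := Finset.mem_Icc.2 ⟨hi.1, by omega⟩
    exact laneExchange_mem_Icc_inflow (abs_velocity_sub_le hv (hR _ hj') (hR j hj) hi)
      (hr _ hj') (hr j hj)
  · exact ⟨by nlinarith [(hr j hj).1], by nlinarith [(hr j hj).2]⟩

theorem src_mem_Icc_outflow (hK : 0 ≤ K)
    (hv : ∀ l ∈ Finset.Icc 1 M, ∀ x ∈ Icc (0 : ℝ) 1, v l x ∈ Icc 0 K)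
    (hr : ∀ l ∈ Finset.Icc 1 M, r l ∈ Icc (0 : ℝ) 1)
    (hR : ∀ l ∈ Finset.Icc 1 M, R l ∈ Icc (0 : ℝ) 1) {j : ℕ} (hj : j ∈ Finset.Icc 1 M) :
    src M v j (r j) (r (j + 1)) (R j) (R (j + 1)) ∈ Icc (-(K * (1 - r j))) (K * r j) := by
  rw [src_eq_ite]
  split_ifs with hi
  · have hj' : j + 1 ∈ Finset.Icc 1 M := Finset.mem_Icc.2 ⟨by omega, hi.2⟩
    exact laneExchange_mem_Icc_outflow (abs_velocity_sub_le hv (hR j hj) (hR _ hj') hi)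
      (hr j hj) (hr _ hj')
  · exact ⟨by nlinarith [(hr j hj).2], by nlinarith [(hr j hj).1]⟩

end Source

theorem add_mul_sub_mul_mem_Icc {u dt K S₁ S₂ : ℝ} (hu : u ∈ Icc (0 : ℝ) 1) (hdt : 0 ≤ dt)
    (hK : 2 * dt * K ≤ 1) (hS₁ : S₁ ∈ Icc (-(K * u)) (K * (1 - u)))
    (hS₂ : S₂ ∈ Icc (-(K * (1 - u))) (K * u)) :
    u + dt * S₁ - dt * S₂ ∈ Icc (0 : ℝ) 1 := by
  obtain ⟨hu0, hu1⟩ := hu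
  constructor
  · nlinarith [mul_le_mul_of_nonneg_left hS₁.1 hdt, mul_le_mul_of_nonneg_left hS₂.2 hdt]
  · nlinarith [mul_le_mul_of_nonneg_left hS₁.2 hdt, mul_le_mul_of_nonneg_left hS₂.1 hdt]

theorem scheme_invariance_general
    (M : ℕ) (hM : 2 ≤ M)
    (v : ℕ → ℝ → ℝ) (θ : ℕ → ℝ)
    (dx dt Vmax V'max : ℝ)
    (w : ℝ → ℝ)
    (ρ₀ : ℕ → ℝ → ℝ) (ρ ρh : ℕ → ℕ → ℤ → ℝ)
    (hdx : dx ∈ Set.Ioo (0 : ℝ) 1) (hdt : 0 < dt)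
    (hw_nonneg : ∀ x, 0 ≤ w x)
    (hw_int : ∫ x, w x = 1)
    (hv_nonneg : ∀ j ∈ Finset.Icc 1 M, ∀ x ∈ Set.Icc (0 : ℝ) 1, 0 ≤ v j x)
    (hv_one : ∀ j ∈ Finset.Icc 1 M, v j 1 = 0)
    (hVmax : ∀ j ∈ Finset.Icc 1 M, ∀ x ∈ Set.Icc (0 : ℝ) 1, |v j x| ≤ Vmax)
    (hV'nonneg : 0 ≤ V'max)
    (hLip : ∀ j ∈ Finset.Icc 1 M,
      LipschitzOnWith (Real.toNNReal V'max) (v j) (Set.Icc (0 : ℝ) 1))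
    (hθmem : ∀ j ∈ Finset.Icc 1 M, θ j ∈ Set.Icc (0 : ℝ) 1)
    (hCFL : dt / dx * (Vmax + V'max) ≤ 1 / 2)
    (hρ₀mem : ∀ j ∈ Finset.Icc 1 M, ∀ x, ρ₀ j x ∈ Set.Icc (0 : ℝ) 1)
    (hinit : ∀ j ∈ Finset.Icc 1 M, ∀ k : ℤ,
      ρ 0 j k = (∫ x in ((k : ℝ) * dx)..(((k : ℝ) + 1) * dx), ρ₀ j x) / dx)
    (hconv : ∀ n : ℕ, ∀ j ∈ Finset.Icc 1 M, ∀ k : ℤ,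
      ρh n j k = ρ n j k - dt / dx *
        (numFlux v θ j (ρ n j k) (ρ n j (k + 1))
          - numFlux v θ j (ρ n j (k - 1)) (ρ n j k)))
    (hrelax : ∀ n : ℕ, ∀ j ∈ Finset.Icc 1 M, ∀ k : ℤ,
      ρ (n + 1) j k = ρh n j k
        + dt * src M v (j - 1) (ρh n (j - 1) k) (ρh n j k)
            (dconv dx w (ρh n (j - 1)) k) (dconv dx w (ρh n j) k)
        - dt * src M v j (ρh n j k) (ρh n (j + 1) k)
            (dconv dx w (ρh n j) k) (dconv dx w (ρh n (j + 1)) k))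
    :
    ∀ n : ℕ, ∀ j ∈ Finset.Icc 1 M, ∀ k : ℤ,
      ρ n j k ∈ Set.Icc (0 : ℝ) 1 ∧ ρh n j k ∈ Set.Icc (0 : ℝ) 1 := by
  obtain ⟨hdx0, hdx1⟩ := hdx
  have hratio : 0 ≤ dt / dx := div_nonneg hdt.le hdx0.le
  have hVmax_nonneg : 0 ≤ Vmax := (abs_nonneg _).trans
    (hVmax 1 (Finset.mem_Icc.2 ⟨le_rfl, by omega⟩) 0 (left_mem_Icc.2 zero_le_one))
  have hdt_le : dt ≤ dt / dx := (le_div_iff₀ hdx0).2 (mul_le_of_le_one_right hdt.le hdx1.le)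
  have hv_mem : ∀ j ∈ Finset.Icc 1 M, ∀ x ∈ Icc (0 : ℝ) 1, v j x ∈ Icc 0 Vmax :=
    fun j hj x hx => ⟨hv_nonneg j hj x hx, le_of_abs_le (hVmax j hj x hx)⟩
  have hv_le : ∀ j ∈ Finset.Icc 1 M, ∀ x ∈ Icc (0 : ℝ) 1, v j x ≤ V'max * (1 - x) :=
    fun j hj x hx => by
      simpa only [Real.coe_toNNReal _ hV'nonneg] using
        le_mul_one_sub_of_lipschitzOnWith (hLip j hj) (hv_one j hj) hx
  have hconvective : ∀ n, (∀ j ∈ Finset.Icc 1 M, ∀ k, ρ n j k ∈ Icc (0 : ℝ) 1) →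
      ∀ j ∈ Finset.Icc 1 M, ∀ k, ρh n j k ∈ Icc (0 : ℝ) 1 := fun n hn j hj k =>
    hconv n j hj k ▸ godunov_step_mem_Icc hratio hV'nonneg (by nlinarith) (by nlinarith)
      (hθmem j hj) (hv_nonneg j hj) (fun x hx => (hv_mem j hj x hx).2) (hv_le j hj)
      (hn j hj _) (hn j hj _) (hn j hj _)
  have hrelaxation : ∀ n, (∀ j ∈ Finset.Icc 1 M, ∀ k, ρh n j k ∈ Icc (0 : ℝ) 1) →
      ∀ j ∈ Finset.Icc 1 M, ∀ k, ρ (n + 1) j k ∈ Icc (0 : ℝ) 1 := by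
    intro n hn j hj k
    have hr : ∀ l ∈ Finset.Icc 1 M, ρh n l k ∈ Icc (0 : ℝ) 1 := fun l hl => hn l hl k
    have hR := fun l hl => dconv_mem_Icc hdx0.le hw_nonneg hw_int (hn l hl) k
    rw [hrelax n j hj k]
    exact add_mul_sub_mul_mem_Icc (hn j hj k) hdt.le (by nlinarith)
      (src_mem_Icc_inflow (r := fun l => ρh n l k) hVmax_nonneg hv_mem hr hR hj)
      (src_mem_Icc_outflow (r := fun l => ρh n l k) hVmax_nonneg hv_mem hr hR hj)
  have hρ : ∀ n, ∀ j ∈ Finset.Icc 1 M, ∀ k, ρ n j k ∈ Icc (0 : ℝ) 1 := by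
    intro n
    induction n with
    | zero =>
      intro j hj k
      have h := intervalIntegral_div_sub_mem_Icc
        (by linarith : (k : ℝ) * dx < (k + 1) * dx) fun x _ => hρ₀mem j hj x
      rwa [show ((k : ℝ) + 1) * dx - k * dx = dx by ring, ← hinit j hj k] at h
    | succ n ih => exact hrelaxation n (hconvective n ih)
  exact fun n j hj k => ⟨hρ n j hj k, hconvective n (hρ n) j hj k⟩

theorem scheme_invariance
    (M : ℕ) (hM : 2 ≤ M)
    (v : ℕ → ℝ → ℝ) (θ : ℕ → ℝ)
    (dx dt ν Vmax V'max : ℝ)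
    (w : ℝ → ℝ)
    (ρ₀ : ℕ → ℝ → ℝ) (ρ ρh : ℕ → ℕ → ℤ → ℝ)
    (hdx : dx ∈ Set.Ioo (0 : ℝ) 1) (hdt : 0 < dt) (hν : 0 < ν)
    (hw_cont : ContinuousOn w (Set.Icc (-ν) ν))
    (hw_nonneg : ∀ x, 0 ≤ w x)
    (hw_supp : Function.support w ⊆ Set.Icc (-ν) ν)
    (hw_int : ∫ x, w x = 1)
    (hv_anti : ∀ j ∈ Finset.Icc 1 M, StrictAntiOn (v j) (Set.Icc (0 : ℝ) 1))
    (hv_nonneg : ∀ j ∈ Finset.Icc 1 M, ∀ x ∈ Set.Icc (0 : ℝ) 1, 0 ≤ v j x)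
    (hv_one : ∀ j ∈ Finset.Icc 1 M, v j 1 = 0)
    (hVmax : ∀ j ∈ Finset.Icc 1 M, ∀ x ∈ Set.Icc (0 : ℝ) 1, |v j x| ≤ Vmax)
    (hV'nonneg : 0 ≤ V'max)
    (hLip : ∀ j ∈ Finset.Icc 1 M,
      LipschitzOnWith (Real.toNNReal V'max) (v j) (Set.Icc (0 : ℝ) 1))
    (hθmem : ∀ j ∈ Finset.Icc 1 M, θ j ∈ Set.Icc (0 : ℝ) 1)
    (hθmax : ∀ j ∈ Finset.Icc 1 M, ∀ u ∈ Set.Icc (0 : ℝ) 1,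
      u * v j u ≤ θ j * v j (θ j))
    (hθuniq : ∀ j ∈ Finset.Icc 1 M, ∀ u ∈ Set.Icc (0 : ℝ) 1,
      u * v j u = θ j * v j (θ j) → u = θ j)
    (hCFL : dt / dx * (Vmax + V'max) ≤ 1 / 2)
    (hρ₀mem : ∀ j ∈ Finset.Icc 1 M, ∀ x, ρ₀ j x ∈ Set.Icc (0 : ℝ) 1)
    (hmeas : ∀ j ∈ Finset.Icc 1 M, Measurable (ρ₀ j))
    (hinit : ∀ j ∈ Finset.Icc 1 M, ∀ k : ℤ,
      ρ 0 j k = (∫ x in ((k : ℝ) * dx)..(((k : ℝ) + 1) * dx), ρ₀ j x) / dx)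
    (hconv : ∀ n : ℕ, ∀ j ∈ Finset.Icc 1 M, ∀ k : ℤ,
      ρh n j k = ρ n j k - dt / dx *
        (numFlux v θ j (ρ n j k) (ρ n j (k + 1))
          - numFlux v θ j (ρ n j (k - 1)) (ρ n j k)))
    (hrelax : ∀ n : ℕ, ∀ j ∈ Finset.Icc 1 M, ∀ k : ℤ,
      ρ (n + 1) j k = ρh n j k
        + dt * src M v (j - 1) (ρh n (j - 1) k) (ρh n j k)
            (dconv dx w (ρh n (j - 1)) k) (dconv dx w (ρh n j) k)
        - dt * src M v j (ρh n j k) (ρh n (j + 1) k)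
            (dconv dx w (ρh n j) k) (dconv dx w (ρh n (j + 1)) k))
    :
    ∀ n : ℕ, ∀ j ∈ Finset.Icc 1 M, ∀ k : ℤ,
      ρ n j k ∈ Set.Icc (0 : ℝ) 1 ∧ ρh n j k ∈ Set.Icc (0 : ℝ) 1 :=
  scheme_invariance_general M hM v θ dx dt Vmax V'max w ρ₀ ρ ρh hdx hdt hw_nonneg hw_int hv_nonneg
    hv_one hVmax hV'nonneg hLip hθmem hCFL hρ₀mem hinit hconv hrelax
end

section
/- For velocity functions v_j, v_{j+1} : [0,1] → ℝ that are nonincreasing, the source map S_j(u, w, U, W) = (v_{j+1}(W) − v_j(U))⁺ · u · (1 − w) − (v_{j+1}(W) − v_j(U))⁻ · w · (1 − u) is, on [0,1]⁴, nondecreasing in its first argument u and in its third argument U, and nonincreasing in its second argument w and in its fourth argument W. -/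
open scoped BigOperators ENNReal
open MeasureTheory

noncomputable def srcJ (vj vj1 : ℝ → ℝ) (u w U W : ℝ) : ℝ :=
  max (vj1 W - vj U) 0 * u * (1 - w) - max (-(vj1 W - vj U)) 0 * w * (1 - u)

lemma srcJ_key (a b : ℝ) (ha : 0 ≤ a) (hb : 0 ≤ b) {d1 d2 : ℝ} (h : d1 ≤ d2) :
    max d1 0 * a - max (-d1) 0 * b ≤ max d2 0 * a - max (-d2) 0 * b :=
  sub_le_sub (mul_le_mul_of_nonneg_right (max_le_max h le_rfl) ha)
    (mul_le_mul_of_nonneg_right (max_le_max (neg_le_neg h) le_rfl) hb)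

theorem source_monotonicity
    (vj vj1 : ℝ → ℝ)
    (hj : AntitoneOn vj (Set.Icc (0 : ℝ) 1))
    (hj1 : AntitoneOn vj1 (Set.Icc (0 : ℝ) 1)) :
    (∀ w ∈ Set.Icc (0 : ℝ) 1, ∀ U ∈ Set.Icc (0 : ℝ) 1, ∀ W ∈ Set.Icc (0 : ℝ) 1,
        MonotoneOn (fun u => srcJ vj vj1 u w U W) (Set.Icc (0 : ℝ) 1)) ∧
    (∀ u ∈ Set.Icc (0 : ℝ) 1, ∀ U ∈ Set.Icc (0 : ℝ) 1, ∀ W ∈ Set.Icc (0 : ℝ) 1,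
        AntitoneOn (fun w => srcJ vj vj1 u w U W) (Set.Icc (0 : ℝ) 1)) ∧
    (∀ u ∈ Set.Icc (0 : ℝ) 1, ∀ w ∈ Set.Icc (0 : ℝ) 1, ∀ W ∈ Set.Icc (0 : ℝ) 1,
        MonotoneOn (fun U => srcJ vj vj1 u w U W) (Set.Icc (0 : ℝ) 1)) ∧
    (∀ u ∈ Set.Icc (0 : ℝ) 1, ∀ w ∈ Set.Icc (0 : ℝ) 1, ∀ U ∈ Set.Icc (0 : ℝ) 1,
        AntitoneOn (fun W => srcJ vj vj1 u w U W) (Set.Icc (0 : ℝ) 1)) := by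
  refine ⟨?_, ?_, ?_, ?_⟩
  · intro w hw U _ W _ u1 _ u2 _ h
    simp only [srcJ]
    have hp : 0 ≤ max (vj1 W - vj U) 0 := le_max_right _ _
    have hn : 0 ≤ max (-(vj1 W - vj U)) 0 := le_max_right _ _
    obtain ⟨hw0, hw1⟩ := hw
    nlinarith [mul_nonneg hp (sub_nonneg.mpr hw1), mul_nonneg hn hw0]
  · intro u hu U _ W _ w1 _ w2 _ h
    simp only [srcJ]
    have hp : 0 ≤ max (vj1 W - vj U) 0 := le_max_right _ _
    have hn : 0 ≤ max (-(vj1 W - vj U)) 0 := le_max_right _ _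
    obtain ⟨hu0, hu1⟩ := hu
    nlinarith [mul_nonneg hp hu0, mul_nonneg hn (sub_nonneg.mpr hu1)]
  · intro u hu w hw W _ U1 hU1 U2 hU2 h
    obtain ⟨hu0, hu1⟩ := hu
    obtain ⟨hw0, hw1⟩ := hw
    have hd : vj1 W - vj U1 ≤ vj1 W - vj U2 := by
      have := hj hU1 hU2 h; linarith
    have := srcJ_key (u * (1 - w)) (w * (1 - u))
      (mul_nonneg hu0 (by linarith)) (mul_nonneg hw0 (by linarith)) hd
    simpa [srcJ, mul_assoc] using this
  · intro u hu w hw U _ W1 hW1 W2 hW2 h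
    obtain ⟨hu0, hu1⟩ := hu
    obtain ⟨hw0, hw1⟩ := hw
    have hd : vj1 W2 - vj U ≤ vj1 W1 - vj U := by
      have := hj1 hW1 hW2 h; linarith
    have := srcJ_key (u * (1 - w)) (w * (1 - u))
      (mul_nonneg hu0 (by linarith)) (mul_nonneg hw0 (by linarith)) hd
    simpa [srcJ, mul_assoc] using this
end
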